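/- Fix 0 < q < 1, θ > 0, and α with 0 < α < q^θ; set A = log_q(α) (so A > θ). With g_0 as above, g_0''(A) = Ψ'_q(θ) q^{A-θ} - Ψ'_q(A) = (log q)^2 Σ_{k=0}^∞ q^{A+k} ( 1/(1-q^{θ+k})^2 - 1/(1-q^{A+k})^2 ) > 0. -/

import Mathlib

open Complex Real

/-- The infinite q-Pochhammer symbol `(a; q)_∞ = ∏_{k=0}^∞ (1 - a q^k)`. -/
noncomputable def qPoch (a q : ℂ) : ℂ := ∏' k : ℕ, (1 - a * q ^ k)

/-- The q-Gamma function `Γ_q(z) = (1-q)^{1-z} (q;q)_∞ / (q^z;q)_∞`. -/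
noncomputable def qGamma (q : ℝ) (z : ℂ) : ℂ :=
  ((1 - q : ℂ)) ^ ((1 : ℂ) - z) * qPoch (q : ℂ) (q : ℂ) / qPoch ((q : ℂ) ^ z) (q : ℂ)

/-- The q-digamma function `Ψ_q(z) = d/dz log Γ_q(z)`. -/
noncomputable def qDigamma (q : ℝ) (z : ℂ) : ℂ :=
  deriv (fun w => Complex.log (qGamma q w)) z

/-- `κ(q,θ) = Ψ'_q(θ) / ((log q)^2 q^θ)`. -/
noncomputable def kappaC (q θ : ℝ) : ℂ :=
  deriv (qDigamma q) (θ : ℂ) / (((Real.log q : ℂ)) ^ 2 * (q : ℂ) ^ (θ : ℂ))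

/-- `f(q,θ) = Ψ'_q(θ)/(log q)^2 - Ψ_q(θ)/log q - log(1-q)/log q`. -/
noncomputable def fC (q θ : ℝ) : ℂ :=
  deriv (qDigamma q) (θ : ℂ) / ((Real.log q : ℂ)) ^ 2
    - qDigamma q (θ : ℂ) / (Real.log q : ℂ)
    - (Real.log (1 - q) : ℂ) / (Real.log q : ℂ)

/-- `f₀(Z) = -f (log q) Z + κ q^Z + log((q^Z; q)_∞)`. -/
noncomputable def f0 (q θ : ℝ) (Z : ℂ) : ℂ :=
  -fC q θ * (Real.log q : ℂ) * Z + kappaC q θ * (q : ℂ) ^ Z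
    + Complex.log (qPoch ((q : ℂ) ^ Z) (q : ℂ))

/-- `A = log_q α`. -/
noncomputable def Aq (q α : ℝ) : ℝ := Real.log α / Real.log q

/-- `g(q,θ) = (Ψ'_q(θ)/(log q)^2)(α/q^θ) - Ψ_q(A)/log q - log(1-q)/log q`. -/
noncomputable def gC (q θ α : ℝ) : ℂ :=
  deriv (qDigamma q) (θ : ℂ) / ((Real.log q : ℂ)) ^ 2 * ((α : ℂ) / (q : ℂ) ^ (θ : ℂ))
    - qDigamma q ((Aq q α : ℝ) : ℂ) / (Real.log q : ℂ)
    - (Real.log (1 - q) : ℂ) / (Real.log q : ℂ)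

/-- `g₀(Z) = -g (log q) Z + κ q^Z + log((q^Z; q)_∞)`. -/
noncomputable def g0 (q θ α : ℝ) (Z : ℂ) : ℂ :=
  -gC q θ α * (Real.log q : ℂ) * Z + kappaC q θ * (q : ℂ) ^ Z
    + Complex.log (qPoch ((q : ℂ) ^ Z) (q : ℂ))

/-!
On the half-plane `Re w > 0` the product `(q^w; q)_∞` is the exponential of
`S(w) = ∑ₖ log (1 - q^(w+k))`, and `S` can be differentiated termwise because the terms and
their derivatives are dominated by a geometric series. `S` is real on the positive real axis, so
near it the principal logarithms in `g₀` and in `log Γ_q` are `S` and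
`(1 - w) log (1 - q) + S(1) - S(w)`. Hence `g₀'' = κ (log q)² q^w + S''` and `Ψ'_q = -S''`, where
`S''(x) = -(log q)² ∑ₖ q^(x+k) / (1 - q^(x+k))²` on the real axis. Substituting `κ` gives the first
formula and regrouping the two series gives the second; the sum is positive termwise because
`A > θ` makes `q^(A+k) < q^(θ+k)`.
-/

open Filter Topology

lemma hasDerivAt_tsum_of_lt_re {ι : Type*} {f f' : ι → ℂ → ℂ} {u : ι → ℝ} {r : ℝ} {w : ℂ}
    (hu : Summable u) (hf : ∀ i z, r < z.re → HasDerivAt (f i) (f' i z) z)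
    (hf' : ∀ i z, r < z.re → ‖f' i z‖ ≤ u i) (hsum : Summable fun i => f i w) (hw : r < w.re) :
    HasDerivAt (fun z => ∑' i, f i z) (∑' i, f' i w) w :=
  hasDerivAt_tsum_of_isPreconnected hu (isOpen_lt continuous_const Complex.continuous_re)
    (convex_halfSpace_re_gt r).isPreconnected hf hf' hw hsum hw

lemma eventuallyEq_log_exp {F : ℂ → ℂ} {z : ℂ} (hF : ContinuousAt F z) (hz : (F z).im = 0) :
    (fun w => Complex.log (Complex.exp (F w))) =ᶠ[𝓝 z] F := by
  have him : Tendsto (fun w => (F w).im) (𝓝 z) (𝓝 0) :=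
    hz ▸ Complex.continuous_im.continuousAt.comp hF
  filter_upwards [him.eventually (Ioo_mem_nhds (neg_neg_iff_pos.2 Real.pi_pos) Real.pi_pos)]
    with w hw
  exact Complex.log_exp hw.1 hw.2.le

lemma norm_div_one_sub_pow_le {v : ℂ} {ρ t : ℝ} (hρ0 : 0 ≤ ρ) (hρ1 : ρ < 1) (ht1 : t ≤ 1)
    (hv : ‖v‖ ≤ ρ * t) (n : ℕ) : ‖v / (1 - v) ^ n‖ ≤ ρ / (1 - ρ) ^ n * t := by
  have hvρ : ‖v‖ ≤ ρ := hv.trans (mul_le_of_le_one_right hρ0 ht1)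
  have hden : 1 - ρ ≤ ‖1 - v‖ := by
    linarith [norm_sub_norm_le (1 : ℂ) v, norm_one (α := ℂ)]
  rw [norm_div, norm_pow, div_mul_eq_mul_div]
  exact div_le_div₀ ((norm_nonneg v).trans hv) hv (by have := sub_pos.2 hρ1; positivity)
    (pow_le_pow_left₀ (sub_nonneg.2 hρ1.le) hden n)

section QPower

variable {q : ℝ}

lemma norm_qcpow_add_natCast (hq0 : 0 < q) (w : ℂ) (k : ℕ) :
    ‖(q : ℂ) ^ (w + k)‖ = q ^ (w.re + k) := by
  rw [Complex.norm_cpow_eq_rpow_re_of_pos hq0]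
  simp

lemma norm_qcpow_add_natCast_le (hq0 : 0 < q) (hq1 : q ≤ 1) {r : ℝ} {w : ℂ} (hw : r ≤ w.re)
    (k : ℕ) : ‖(q : ℂ) ^ (w + k)‖ ≤ q ^ r * q ^ k := by
  rw [norm_qcpow_add_natCast hq0, ← Real.rpow_natCast, ← Real.rpow_add hq0]
  exact Real.rpow_le_rpow_of_exponent_ge hq0 hq1 (by linarith)

lemma one_sub_qcpow_add_natCast_mem_slitPlane (hq0 : 0 < q) (hq1 : q < 1) {w : ℂ}
    (hw : 0 < w.re) (k : ℕ) : 1 - (q : ℂ) ^ (w + k) ∈ Complex.slitPlane := by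
  rw [sub_eq_add_neg]
  refine Complex.mem_slitPlane_of_norm_lt_one ?_
  rw [norm_neg, norm_qcpow_add_natCast hq0]
  exact Real.rpow_lt_one hq0.le hq1 (by positivity)

lemma qcpow_ofReal_add_natCast (hq0 : 0 < q) (x : ℝ) (k : ℕ) :
    (q : ℂ) ^ ((x : ℂ) + k) = ((q ^ (x + k) : ℝ) : ℂ) := by
  rw [Complex.ofReal_cpow hq0.le]
  push_cast
  rfl

lemma hasDerivAt_qcpow (hq0 : 0 < q) (w : ℂ) :
    HasDerivAt (fun z : ℂ => (q : ℂ) ^ z) ((q : ℂ) ^ w * Real.log q) w := by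
  simpa [Complex.ofReal_log hq0.le] using
    (hasDerivAt_id w).const_cpow (c := (q : ℂ)) (Or.inl (by exact_mod_cast hq0.ne'))

lemma hasDerivAt_qcpow_add_natCast (hq0 : 0 < q) (k : ℕ) (w : ℂ) :
    HasDerivAt (fun z : ℂ => (q : ℂ) ^ (z + k)) ((q : ℂ) ^ (w + k) * Real.log q) w := by
  simpa [Function.comp_def] using
    (hasDerivAt_qcpow hq0 (w + k)).comp w ((hasDerivAt_id w).add_const (k : ℂ))

lemma hasDerivAt_log_one_sub_qcpow (hq0 : 0 < q) (hq1 : q < 1) (k : ℕ) {w : ℂ}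
    (hw : 0 < w.re) :
    HasDerivAt (fun z : ℂ => Complex.log (1 - (q : ℂ) ^ (z + k)))
      (-(Real.log q : ℂ) * ((q : ℂ) ^ (w + k) / (1 - (q : ℂ) ^ (w + k)))) w := by
  convert ((hasDerivAt_qcpow_add_natCast hq0 k w).const_sub 1).clog
    (one_sub_qcpow_add_natCast_mem_slitPlane hq0 hq1 hw k) using 1
  ring

lemma hasDerivAt_neg_log_mul_qcpow_div_one_sub_qcpow (hq0 : 0 < q) (hq1 : q < 1) (k : ℕ) {w : ℂ}
    (hw : 0 < w.re) :
    HasDerivAt (fun z : ℂ => -(Real.log q : ℂ) * ((q : ℂ) ^ (z + k) / (1 - (q : ℂ) ^ (z + k))))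
      (-(Real.log q : ℂ) ^ 2 * ((q : ℂ) ^ (w + k) / (1 - (q : ℂ) ^ (w + k)) ^ 2)) w := by
  have hv := hasDerivAt_qcpow_add_natCast hq0 k w
  have hne := Complex.slitPlane_ne_zero (one_sub_qcpow_add_natCast_mem_slitPlane hq0 hq1 hw k)
  refine ((hv.div (hv.const_sub 1) hne).const_mul (-(Real.log q : ℂ))).congr_deriv ?_
  ring

lemma summable_norm_qcpow_add_natCast (hq0 : 0 < q) (hq1 : q < 1) (w : ℂ) :
    Summable fun k : ℕ => ‖(q : ℂ) ^ (w + k)‖ := by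
  simp_rw [norm_qcpow_add_natCast hq0, Real.rpow_add hq0, Real.rpow_natCast]
  exact (summable_geometric_of_lt_one hq0.le hq1).mul_left _

lemma summable_log_one_sub_qcpow (hq0 : 0 < q) (hq1 : q < 1) (w : ℂ) :
    Summable fun k : ℕ => Complex.log (1 - (q : ℂ) ^ (w + k)) := by
  simpa [sub_eq_add_neg] using Complex.summable_log_one_add_of_summable
    (summable_norm_qcpow_add_natCast hq0 hq1 w).of_norm.neg

lemma norm_qcpow_div_one_sub_qcpow_pow_le (hq0 : 0 < q) (hq1 : q < 1) {r : ℝ} (hr : 0 < r)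
    {w : ℂ} (hw : r ≤ w.re) (k n : ℕ) :
    ‖(q : ℂ) ^ (w + k) / (1 - (q : ℂ) ^ (w + k)) ^ n‖ ≤ q ^ r / (1 - q ^ r) ^ n * q ^ k :=
  norm_div_one_sub_pow_le (by positivity) (Real.rpow_lt_one hq0.le hq1 hr)
    (pow_le_one₀ hq0.le hq1.le) (norm_qcpow_add_natCast_le hq0 hq1.le hw k) n

end QPower

noncomputable def qLogPoch (q : ℝ) (w : ℂ) : ℂ := ∑' k : ℕ, Complex.log (1 - (q : ℂ) ^ (w + k))

noncomputable def qLogPochDeriv (q : ℝ) (w : ℂ) : ℂ :=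
  ∑' k : ℕ, -(Real.log q : ℂ) * ((q : ℂ) ^ (w + k) / (1 - (q : ℂ) ^ (w + k)))

noncomputable def qLogPochDeriv2 (q : ℝ) (w : ℂ) : ℂ :=
  ∑' k : ℕ, -(Real.log q : ℂ) ^ 2 * ((q : ℂ) ^ (w + k) / (1 - (q : ℂ) ^ (w + k)) ^ 2)

section QLogPoch

variable {q : ℝ}

lemma norm_mul_qcpow_div_one_sub_qcpow_pow_le (hq0 : 0 < q) (hq1 : q < 1) (c : ℂ) {r : ℝ}
    (hr : 0 < r) {w : ℂ} (hw : r ≤ w.re) (k n : ℕ) :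
    ‖c * ((q : ℂ) ^ (w + k) / (1 - (q : ℂ) ^ (w + k)) ^ n)‖
      ≤ ‖c‖ * (q ^ r / (1 - q ^ r) ^ n) * q ^ k := by
  rw [norm_mul, mul_assoc]
  exact mul_le_mul_of_nonneg_left (norm_qcpow_div_one_sub_qcpow_pow_le hq0 hq1 hr hw k n)
    (norm_nonneg c)

lemma norm_neg_log_mul_qcpow_div_one_sub_qcpow_le (hq0 : 0 < q) (hq1 : q < 1) {r : ℝ}
    (hr : 0 < r) {w : ℂ} (hw : r ≤ w.re) (k : ℕ) :
    ‖-(Real.log q : ℂ) * ((q : ℂ) ^ (w + k) / (1 - (q : ℂ) ^ (w + k)))‖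
      ≤ ‖-(Real.log q : ℂ)‖ * (q ^ r / (1 - q ^ r)) * q ^ k := by
  simpa only [pow_one] using
    norm_mul_qcpow_div_one_sub_qcpow_pow_le hq0 hq1 (-(Real.log q : ℂ)) hr hw k 1

lemma hasDerivAt_qLogPoch (hq0 : 0 < q) (hq1 : q < 1) {w : ℂ} (hw : 0 < w.re) :
    HasDerivAt (qLogPoch q) (qLogPochDeriv q w) w := by
  have hr : 0 < w.re / 2 := half_pos hw
  exact hasDerivAt_tsum_of_lt_re ((summable_geometric_of_lt_one hq0.le hq1).mul_left _)
    (fun k z hz => hasDerivAt_log_one_sub_qcpow hq0 hq1 k (hr.trans hz))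
    (fun k z hz => norm_neg_log_mul_qcpow_div_one_sub_qcpow_le hq0 hq1 hr hz.le k)
    (summable_log_one_sub_qcpow hq0 hq1 w) (half_lt_self hw)

lemma hasDerivAt_qLogPochDeriv (hq0 : 0 < q) (hq1 : q < 1) {w : ℂ} (hw : 0 < w.re) :
    HasDerivAt (qLogPochDeriv q) (qLogPochDeriv2 q w) w := by
  have hr : 0 < w.re / 2 := half_pos hw
  have hgeom := summable_geometric_of_lt_one hq0.le hq1
  exact hasDerivAt_tsum_of_lt_re (hgeom.mul_left _)
    (fun k z hz => hasDerivAt_neg_log_mul_qcpow_div_one_sub_qcpow hq0 hq1 k (hr.trans hz))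
    (fun k z hz => norm_mul_qcpow_div_one_sub_qcpow_pow_le hq0 hq1 _ hr hz.le k 2)
    ((hgeom.mul_left _).of_norm_bounded
      fun k => norm_neg_log_mul_qcpow_div_one_sub_qcpow_le hq0 hq1 hr (half_lt_self hw).le k)
    (half_lt_self hw)

lemma qPoch_qcpow_eq_exp_qLogPoch (hq0 : 0 < q) (hq1 : q < 1) {w : ℂ} (hw : 0 < w.re) :
    qPoch ((q : ℂ) ^ w) q = Complex.exp (qLogPoch q w) := by
  rw [qLogPoch, Complex.cexp_tsum_eq_tprod
    (fun k => Complex.slitPlane_ne_zero (one_sub_qcpow_add_natCast_mem_slitPlane hq0 hq1 hw k))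
    (summable_log_one_sub_qcpow hq0 hq1 w), qPoch]
  congr! 2 with k
  rw [Complex.cpow_add _ _ (Complex.ofReal_ne_zero.2 hq0.ne'), Complex.cpow_natCast]

lemma qLogPoch_ofReal (hq0 : 0 < q) (hq1 : q ≤ 1) {x : ℝ} (hx : 0 ≤ x) :
    qLogPoch q x = ((∑' k : ℕ, Real.log (1 - q ^ (x + k)) : ℝ) : ℂ) := by
  rw [qLogPoch, Complex.ofReal_tsum]
  refine tsum_congr fun k => ?_
  rw [qcpow_ofReal_add_natCast hq0, Complex.ofReal_log
    (sub_nonneg.2 (Real.rpow_le_one hq0.le hq1 (by positivity)))]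
  push_cast
  rfl

lemma qLogPochDeriv2_ofReal (hq0 : 0 < q) (x : ℝ) :
    qLogPochDeriv2 q x
      = ((-Real.log q ^ 2 * ∑' k : ℕ, q ^ (x + k) / (1 - q ^ (x + k)) ^ 2 : ℝ) : ℂ) := by
  rw [qLogPochDeriv2, tsum_mul_left, Complex.ofReal_mul, Complex.ofReal_tsum]
  push_cast
  simp_rw [qcpow_ofReal_add_natCast hq0]

lemma eventually_re_pos_nhds_ofReal {x : ℝ} (hx : 0 < x) : ∀ᶠ w in 𝓝 (x : ℂ), 0 < w.re :=
  Complex.continuous_re.continuousAt.eventually (lt_mem_nhds (by simpa using hx))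

lemma log_qPoch_qcpow_eventuallyEq (hq0 : 0 < q) (hq1 : q < 1) {x : ℝ} (hx : 0 < x) :
    (fun w => Complex.log (qPoch ((q : ℂ) ^ w) q)) =ᶠ[𝓝 (x : ℂ)] qLogPoch q := by
  have hx' : 0 < (x : ℂ).re := by simpa using hx
  have hlog := eventuallyEq_log_exp (hasDerivAt_qLogPoch hq0 hq1 hx').continuousAt
    (by rw [qLogPoch_ofReal hq0 hq1.le hx.le, Complex.ofReal_im])
  filter_upwards [hlog, eventually_re_pos_nhds_ofReal hx] with w hlog hw
  rw [qPoch_qcpow_eq_exp_qLogPoch hq0 hq1 hw, hlog]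

end QLogPoch

noncomputable def qLogGamma (q : ℝ) (w : ℂ) : ℂ :=
  (1 - w) * Real.log (1 - q) + qLogPoch q 1 - qLogPoch q w

section QDigamma

variable {q : ℝ}

lemma qGamma_eq_exp_qLogGamma (hq0 : 0 < q) (hq1 : q < 1) {w : ℂ} (hw : 0 < w.re) :
    qGamma q w = Complex.exp (qLogGamma q w) := by
  have h1q : 0 < 1 - q := sub_pos.2 hq1
  have hpow : (1 - q : ℂ) ^ (1 - w) = Complex.exp ((1 - w) * Real.log (1 - q)) := by
    have hcast : (1 - q : ℂ) = ((1 - q : ℝ) : ℂ) := by push_cast; rfl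
    rw [hcast, Complex.cpow_def_of_ne_zero (Complex.ofReal_ne_zero.2 h1q.ne'),
      ← Complex.ofReal_log h1q.le, mul_comm]
  have hpoch : qPoch q q = Complex.exp (qLogPoch q 1) := by
    simpa using qPoch_qcpow_eq_exp_qLogPoch hq0 hq1 (w := 1) (by simp)
  rw [qGamma, hpow, hpoch, qPoch_qcpow_eq_exp_qLogPoch hq0 hq1 hw, qLogGamma, ← Complex.exp_add,
    ← Complex.exp_sub]

lemma hasDerivAt_qLogGamma (hq0 : 0 < q) (hq1 : q < 1) {w : ℂ} (hw : 0 < w.re) :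
    HasDerivAt (qLogGamma q) (-Real.log (1 - q) - qLogPochDeriv q w) w := by
  have hlin := (((hasDerivAt_id w).const_sub 1).mul_const (Real.log (1 - q) : ℂ)).add_const
    (qLogPoch q 1)
  refine (hlin.sub (hasDerivAt_qLogPoch hq0 hq1 hw)).congr_deriv ?_
  ring

lemma qLogGamma_ofReal_im (hq0 : 0 < q) (hq1 : q ≤ 1) {x : ℝ} (hx : 0 ≤ x) :
    (qLogGamma q x).im = 0 := by
  have hone := qLogPoch_ofReal hq0 hq1 zero_le_one
  rw [Complex.ofReal_one] at hone
  simp [qLogGamma, hone, qLogPoch_ofReal hq0 hq1 hx]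

lemma log_qGamma_eventuallyEq (hq0 : 0 < q) (hq1 : q < 1) {x : ℝ} (hx : 0 < x) :
    (fun w => Complex.log (qGamma q w)) =ᶠ[𝓝 (x : ℂ)] qLogGamma q := by
  have hx' : 0 < (x : ℂ).re := by simpa using hx
  have hlog := eventuallyEq_log_exp (hasDerivAt_qLogGamma hq0 hq1 hx').continuousAt
    (qLogGamma_ofReal_im hq0 hq1.le hx.le)
  filter_upwards [hlog, eventually_re_pos_nhds_ofReal hx] with w hlog hw
  rw [qGamma_eq_exp_qLogGamma hq0 hq1 hw, hlog]

lemma deriv_qDigamma_eq (hq0 : 0 < q) (hq1 : q < 1) {x : ℝ} (hx : 0 < x) :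
    deriv (qDigamma q) x = -qLogPochDeriv2 q x := by
  have hΨ : qDigamma q =ᶠ[𝓝 (x : ℂ)] fun w => -Real.log (1 - q) - qLogPochDeriv q w := by
    filter_upwards [(log_qGamma_eventuallyEq hq0 hq1 hx).eventuallyEq_nhds,
      eventually_re_pos_nhds_ofReal hx] with w hlog hw
    rw [qDigamma, hlog.deriv_eq]
    exact (hasDerivAt_qLogGamma hq0 hq1 hw).deriv
  rw [hΨ.deriv_eq]
  exact ((hasDerivAt_qLogPochDeriv hq0 hq1 (by simpa using hx)).const_sub _).deriv

lemma deriv_qDigamma_ofReal (hq0 : 0 < q) (hq1 : q < 1) {x : ℝ} (hx : 0 < x) :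
    deriv (qDigamma q) x
      = ((Real.log q ^ 2 * ∑' k : ℕ, q ^ (x + k) / (1 - q ^ (x + k)) ^ 2 : ℝ) : ℂ) := by
  rw [deriv_qDigamma_eq hq0 hq1 hx, qLogPochDeriv2_ofReal hq0]
  push_cast
  ring

end QDigamma

lemma iteratedDeriv_two_g0 {q : ℝ} (hq0 : 0 < q) (hq1 : q < 1) (θ α : ℝ) {x : ℝ} (hx : 0 < x) :
    iteratedDeriv 2 (g0 q θ α) x
      = kappaC q θ * Real.log q ^ 2 * (q : ℂ) ^ (x : ℂ) - deriv (qDigamma q) x := by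
  set c := -gC q θ α * Real.log q
  set κ := kappaC q θ
  have hg0 : g0 q θ α =ᶠ[𝓝 (x : ℂ)] fun w => c * w + κ * (q : ℂ) ^ w + qLogPoch q w := by
    filter_upwards [log_qPoch_qcpow_eventuallyEq hq0 hq1 hx] with w hw
    rw [g0, hw]
  have hderiv : deriv (fun w => c * w + κ * (q : ℂ) ^ w + qLogPoch q w)
      =ᶠ[𝓝 (x : ℂ)] fun w => c + κ * ((q : ℂ) ^ w * Real.log q) + qLogPochDeriv q w := by
    filter_upwards [eventually_re_pos_nhds_ofReal hx] with w hw
    refine ((((hasDerivAt_id w).const_mul c).add ((hasDerivAt_qcpow hq0 w).const_mul κ)).add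
      (hasDerivAt_qLogPoch hq0 hq1 hw)).deriv.trans ?_
    simp
  have hderiv2 : HasDerivAt (fun w => c + κ * ((q : ℂ) ^ w * Real.log q) + qLogPochDeriv q w)
      (κ * ((q : ℂ) ^ (x : ℂ) * Real.log q * Real.log q) + qLogPochDeriv2 q x) x :=
    ((((hasDerivAt_qcpow hq0 x).mul_const (Real.log q : ℂ)).const_mul κ).const_add c).add
      (hasDerivAt_qLogPochDeriv hq0 hq1 (by simpa using hx))
  rw [hg0.iteratedDeriv_eq, iteratedDeriv_succ, iteratedDeriv_one, hderiv.deriv_eq,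
    hderiv2.deriv, deriv_qDigamma_eq hq0 hq1 hx]
  ring

section QTrigammaSeries

variable {q : ℝ}

lemma summable_qpow_div_one_sub_qpow_sq (hq0 : 0 < q) (hq1 : q < 1) {x : ℝ} (hx : 0 < x) :
    Summable fun k : ℕ => q ^ (x + k) / (1 - q ^ (x + k)) ^ 2 := by
  rw [← Complex.summable_ofReal]
  refine ((summable_geometric_of_lt_one hq0.le hq1).mul_left
    (q ^ x / (1 - q ^ x) ^ 2)).of_norm_bounded fun k => ?_
  simpa [qcpow_ofReal_add_natCast hq0] using
    norm_qcpow_div_one_sub_qcpow_pow_le hq0 hq1 hx (w := x) (by simp) k 2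

lemma hasSum_qpow_mul_sub {θ A : ℝ} (hq0 : 0 < q) (hq1 : q < 1) (hθ : 0 < θ) (hA : 0 < A) :
    HasSum (fun k : ℕ => q ^ (A + k) * (1 / (1 - q ^ (θ + k)) ^ 2 - 1 / (1 - q ^ (A + k)) ^ 2))
      (q ^ (A - θ) * ∑' k : ℕ, q ^ (θ + k) / (1 - q ^ (θ + k)) ^ 2
        - ∑' k : ℕ, q ^ (A + k) / (1 - q ^ (A + k)) ^ 2) := by
  refine (((summable_qpow_div_one_sub_qpow_sq hq0 hq1 hθ).hasSum.mul_left (q ^ (A - θ))).sub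
    (summable_qpow_div_one_sub_qpow_sq hq0 hq1 hA).hasSum).congr_fun fun k => ?_
  have hsplit : q ^ (A + k) = q ^ (A - θ) * q ^ (θ + k) := by
    rw [← Real.rpow_add hq0]
    ring_nf
  rw [hsplit]
  ring

lemma qpow_mul_sub_pos {θ A : ℝ} (hq0 : 0 < q) (hq1 : q < 1) (hθ : 0 < θ) (hθA : θ < A)
    (k : ℕ) : 0 < q ^ (A + k) * (1 / (1 - q ^ (θ + k)) ^ 2 - 1 / (1 - q ^ (A + k)) ^ 2) := by
  have hθk : q ^ (θ + k) < 1 := Real.rpow_lt_one hq0.le hq1 (by positivity)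
  have hAθ : q ^ (A + k) < q ^ (θ + k) := Real.rpow_lt_rpow_of_exponent_gt hq0 hq1 (by linarith)
  have hsq : (1 - q ^ (θ + k)) ^ 2 < (1 - q ^ (A + k)) ^ 2 :=
    pow_lt_pow_left₀ (by linarith) (by linarith) two_ne_zero
  exact mul_pos (Real.rpow_pos_of_pos hq0 _)
    (sub_pos.2 (one_div_lt_one_div_of_lt (by have := sub_pos.2 hθk; positivity) hsq))

end QTrigammaSeries

theorem g0_second_deriv_at_A (q θ α : ℝ) (hq0 : 0 < q) (hq1 : q < 1) (hθ : 0 < θ)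
    (hα0 : 0 < α) (hα : α < q ^ θ) :
    iteratedDeriv 2 (g0 q θ α) ((Aq q α : ℝ) : ℂ)
        = deriv (qDigamma q) ((θ : ℝ) : ℂ) * (q : ℂ) ^ (((Aq q α : ℝ) : ℂ) - (θ : ℂ))
          - deriv (qDigamma q) ((Aq q α : ℝ) : ℂ)
    ∧ iteratedDeriv 2 (g0 q θ α) ((Aq q α : ℝ) : ℂ)
        = ((Real.log q ^ 2 * ∑' k : ℕ, q ^ (Aq q α + (k : ℝ)) *
            (1 / (1 - q ^ (θ + (k : ℝ))) ^ 2 - 1 / (1 - q ^ (Aq q α + (k : ℝ))) ^ 2) : ℝ) : ℂ)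
    ∧ 0 < Real.log q ^ 2 * ∑' k : ℕ, q ^ (Aq q α + (k : ℝ)) *
            (1 / (1 - q ^ (θ + (k : ℝ))) ^ 2 - 1 / (1 - q ^ (Aq q α + (k : ℝ))) ^ 2) := by
  set A := Aq q α
  have hlog : Real.log q < 0 := Real.log_neg hq0 hq1
  have hθA : θ < A := by
    rw [show A = Real.log α / Real.log q from rfl, lt_div_iff_of_neg hlog, ← Real.log_rpow hq0]
    exact Real.log_lt_log hα0 hα
  have hA : 0 < A := hθ.trans hθA
  have hq : (q : ℂ) ≠ 0 := Complex.ofReal_ne_zero.2 hq0.ne'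
  have hfirst : iteratedDeriv 2 (g0 q θ α) A
      = deriv (qDigamma q) θ * (q : ℂ) ^ ((A : ℂ) - θ) - deriv (qDigamma q) A := by
    have hlog' : (Real.log q : ℂ) ≠ 0 := Complex.ofReal_ne_zero.2 hlog.ne
    rw [iteratedDeriv_two_g0 hq0 hq1 θ α hA, kappaC, Complex.cpow_sub _ _ hq]
    field_simp
  have hsum := hasSum_qpow_mul_sub hq0 hq1 hθ hA
  refine ⟨hfirst, ?_, mul_pos (sq_pos_of_neg hlog) ?_⟩
  · rw [hfirst, deriv_qDigamma_ofReal hq0 hq1 hθ, deriv_qDigamma_ofReal hq0 hq1 hA, hsum.tsum_eq,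
      ← Complex.ofReal_sub, ← Complex.ofReal_cpow hq0.le]
    push_cast
    ring
  · exact hsum.summable.tsum_pos (fun k => (qpow_mul_sub_pos hq0 hq1 hθ hθA k).le) 0
      (qpow_mul_sub_pos hq0 hq1 hθ hθA 0)
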